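/- If γ is a solution of the fifth central affine curve flow γ_t = (1/16)(q_{xxx} - 6qq_x)·γ + (1/8)(3q² - q_{xx})·γ_x, where q(·,t) is the central affine curvature of γ(·,t), then q satisfies the fifth KdV flow q_t = (1/16)(∂_x⁵q - 10q·∂_x³q - 20(∂_x q)·∂_x²q + 30q²·∂_x q). -/

import Mathlib

/-- Determinant of the 2×2 matrix with columns `u`, `v`. -/
noncomputable def det2 (u v : Fin 2 → ℝ) : ℝ := u 0 * v 1 - u 1 * v 0

/-- Partial derivative in the first (space) variable. -/
noncomputable def pdx {E : Type*} [NormedAddCommGroup E] [NormedSpace ℝ E]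
    (f : ℝ → ℝ → E) : ℝ → ℝ → E := fun x t => deriv (fun y => f y t) x

/-- Partial derivative in the second (time) variable. -/
noncomputable def pdt {E : Type*} [NormedAddCommGroup E] [NormedSpace ℝ E]
    (f : ℝ → ℝ → E) : ℝ → ℝ → E := fun x t => deriv (fun s => f x s) t

section Helpers

variable {E : Type*} [NormedAddCommGroup E] [NormedSpace ℝ E]

lemma sliceX {f : ℝ → ℝ → E} (hf : ContDiff ℝ (⊤ : ℕ∞) (fun p : ℝ × ℝ => f p.1 p.2)) (t : ℝ) :
    ContDiff ℝ (⊤ : ℕ∞) (fun y => f y t) :=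
  hf.comp (contDiff_id.prodMk contDiff_const)

lemma sliceT {f : ℝ → ℝ → E} (hf : ContDiff ℝ (⊤ : ℕ∞) (fun p : ℝ × ℝ => f p.1 p.2)) (x : ℝ) :
    ContDiff ℝ (⊤ : ℕ∞) (fun s => f x s) :=
  hf.comp (contDiff_const.prodMk contDiff_id)

lemma hasDerivX {f : ℝ → ℝ → E} (hf : ContDiff ℝ (⊤ : ℕ∞) (fun p : ℝ × ℝ => f p.1 p.2)) (x t : ℝ) :
    HasDerivAt (fun y => f y t) (pdx f x t) x :=
  (((sliceX hf t).differentiable (by simp)) x).hasDerivAt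

lemma hasDerivT {f : ℝ → ℝ → E} (hf : ContDiff ℝ (⊤ : ℕ∞) (fun p : ℝ × ℝ => f p.1 p.2)) (x t : ℝ) :
    HasDerivAt (fun s => f x s) (pdt f x t) t :=
  (((sliceT hf x).differentiable (by simp)) t).hasDerivAt

lemma pdx_eq_fderiv {f : ℝ → ℝ → E} (hf : ContDiff ℝ (⊤ : ℕ∞) (fun p : ℝ × ℝ => f p.1 p.2)) (x t : ℝ) :
    pdx f x t = fderiv ℝ (fun p : ℝ × ℝ => f p.1 p.2) (x, t) (1, 0) := by
  have h : HasDerivAt (fun y => ((y, t) : ℝ × ℝ)) ((1 : ℝ), (0 : ℝ)) x :=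
    (hasDerivAt_id x).prodMk (hasDerivAt_const x t)
  exact (((hf.differentiable (by simp) (x, t)).hasFDerivAt).comp_hasDerivAt x h).deriv

lemma pdt_eq_fderiv {f : ℝ → ℝ → E} (hf : ContDiff ℝ (⊤ : ℕ∞) (fun p : ℝ × ℝ => f p.1 p.2)) (x t : ℝ) :
    pdt f x t = fderiv ℝ (fun p : ℝ × ℝ => f p.1 p.2) (x, t) (0, 1) := by
  have h : HasDerivAt (fun s => ((x, s) : ℝ × ℝ)) ((0 : ℝ), (1 : ℝ)) t :=
    (hasDerivAt_const t x).prodMk (hasDerivAt_id t)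
  exact (((hf.differentiable (by simp) (x, t)).hasFDerivAt).comp_hasDerivAt t h).deriv

lemma contDiff_pdx {f : ℝ → ℝ → E} (hf : ContDiff ℝ (⊤ : ℕ∞) (fun p : ℝ × ℝ => f p.1 p.2)) :
    ContDiff ℝ (⊤ : ℕ∞) (fun p : ℝ × ℝ => pdx f p.1 p.2) := by
  have h : (fun p : ℝ × ℝ => pdx f p.1 p.2)
      = fun p : ℝ × ℝ => fderiv ℝ (fun p : ℝ × ℝ => f p.1 p.2) p (1, 0) := by
    funext p; exact pdx_eq_fderiv hf p.1 p.2
  rw [h]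
  exact (ContinuousLinearMap.apply ℝ E ((1 : ℝ), (0 : ℝ))).contDiff.comp
    (hf.fderiv_right (by simp))

lemma pdt_pdx_comm {f : ℝ → ℝ → E} (hf : ContDiff ℝ (⊤ : ℕ∞) (fun p : ℝ × ℝ => f p.1 p.2)) (x t : ℝ) :
    pdt (pdx f) x t = pdx (pdt f) x t := by
  have hsym : IsSymmSndFDerivAt ℝ (fun p : ℝ × ℝ => f p.1 p.2) (x, t) :=
    hf.contDiffAt.isSymmSndFDerivAt (by rw [minSmoothness_of_isRCLikeNormedField]; exact WithTop.coe_le_coe.mpr le_top)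
  have hdf : ContDiff ℝ (⊤ : ℕ∞) (fderiv ℝ (fun p : ℝ × ℝ => f p.1 p.2)) := hf.fderiv_right (by simp)
  have h1 : pdt (pdx f) x t
      = fderiv ℝ (fderiv ℝ (fun p : ℝ × ℝ => f p.1 p.2)) (x, t) (0, 1) (1, 0) := by
    have hfun : (fun s => pdx f x s)
        = fun s => (ContinuousLinearMap.apply ℝ E ((1:ℝ), (0:ℝ)))
            (fderiv ℝ (fun p : ℝ × ℝ => f p.1 p.2) (x, s)) := by
      funext s; exact pdx_eq_fderiv hf x s
    have hc : HasDerivAt (fun s => ((x, s) : ℝ × ℝ)) ((0 : ℝ), (1 : ℝ)) t :=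
      (hasDerivAt_const t x).prodMk (hasDerivAt_id t)
    have h2 := ((hdf.differentiable (by simp) (x, t)).hasFDerivAt).comp_hasDerivAt t hc
    have h3 := ((ContinuousLinearMap.apply ℝ E ((1:ℝ), (0:ℝ))).hasFDerivAt).comp_hasDerivAt t h2
    show deriv (fun s => pdx f x s) t = _
    rw [hfun]; exact h3.deriv
  have h2 : pdx (pdt f) x t
      = fderiv ℝ (fderiv ℝ (fun p : ℝ × ℝ => f p.1 p.2)) (x, t) (1, 0) (0, 1) := by
    have hfun : (fun y => pdt f y t)
        = fun y => (ContinuousLinearMap.apply ℝ E ((0:ℝ), (1:ℝ)))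
            (fderiv ℝ (fun p : ℝ × ℝ => f p.1 p.2) (y, t)) := by
      funext y; exact pdt_eq_fderiv hf y t
    have hc : HasDerivAt (fun y => ((y, t) : ℝ × ℝ)) ((1 : ℝ), (0 : ℝ)) x :=
      (hasDerivAt_id x).prodMk (hasDerivAt_const x t)
    have h2' := ((hdf.differentiable (by simp) (x, t)).hasFDerivAt).comp_hasDerivAt x hc
    have h3 := ((ContinuousLinearMap.apply ℝ E ((0:ℝ), (1:ℝ))).hasFDerivAt).comp_hasDerivAt x h2'
    show deriv (fun y => pdt f y t) x = _
    rw [hfun]; exact h3.deriv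
  rw [h1, h2, hsym]

end Helpers

lemma coeff_left {u v : Fin 2 → ℝ} (h : u 0 * v 1 - u 1 * v 0 = 1) {a b c d : ℝ}
    (heq : a • u + b • v = c • u + d • v) : a = c := by
  have h0 : a * u 0 + b * v 0 = c * u 0 + d * v 0 := by simpa using congrFun heq 0
  have h1 : a * u 1 + b * v 1 = c * u 1 + d * v 1 := by simpa using congrFun heq 1
  linear_combination v 1 * h0 - v 0 * h1 - (a - c) * h

/-- If `γ` solves the fifth central affine curve flow
`γ_t = (1/16)(q_{xxx} - 6qq_x)γ + (1/8)(3q² - q_{xx})γ_x`, then its central affine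
curvature `q` solves the fifth KdV flow. -/
theorem fifth_curve_flow_implies_fifth_kdv
    (γ : ℝ → ℝ → Fin 2 → ℝ) (q : ℝ → ℝ → ℝ)
    (hγ : ContDiff ℝ (⊤ : ℕ∞) (fun p : ℝ × ℝ => γ p.1 p.2))
    (hq : ContDiff ℝ (⊤ : ℕ∞) (fun p : ℝ × ℝ => q p.1 p.2))
    (hne : ∀ x t, γ x t ≠ 0)
    (hdet : ∀ x t, det2 (γ x t) (pdx γ x t) = 1)
    (hcurv : ∀ x t, pdx (pdx γ) x t = q x t • γ x t)
    (hflow : ∀ x t, pdt γ x t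
        = ((1/16) * (pdx (pdx (pdx q)) x t - 6 * q x t * pdx q x t)) • γ x t
          + ((1/8) * (3 * q x t ^ 2 - pdx (pdx q) x t)) • pdx γ x t) :
    ∀ x t, pdt q x t
      = (1/16) * (pdx (pdx (pdx (pdx (pdx q)))) x t
          - 10 * q x t * pdx (pdx (pdx q)) x t
          - 20 * pdx q x t * pdx (pdx q) x t
          + 30 * q x t ^ 2 * pdx q x t) := by
  have hq1s := contDiff_pdx hq
  have hq2s := contDiff_pdx hq1s
  have hq3s := contDiff_pdx hq2s
  have hq4s := contDiff_pdx hq3s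
  have hγ1s := contDiff_pdx hγ
  have Hq0 : ∀ x t : ℝ, HasDerivAt (fun y => q y t) (pdx q x t) x :=
    fun x t => hasDerivX hq x t
  have Hq1 : ∀ x t : ℝ, HasDerivAt (fun y => pdx q y t) (pdx (pdx q) x t) x :=
    fun x t => hasDerivX hq1s x t
  have Hq2 : ∀ x t : ℝ, HasDerivAt (fun y => pdx (pdx q) y t) (pdx (pdx (pdx q)) x t) x :=
    fun x t => hasDerivX hq2s x t
  have Hq3 : ∀ x t : ℝ, HasDerivAt (fun y => pdx (pdx (pdx q)) y t)
      (pdx (pdx (pdx (pdx q))) x t) x := fun x t => hasDerivX hq3s x t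
  have Hq4 : ∀ x t : ℝ, HasDerivAt (fun y => pdx (pdx (pdx (pdx q))) y t)
      (pdx (pdx (pdx (pdx (pdx q)))) x t) x := fun x t => hasDerivX hq4s x t
  have Hg0 : ∀ x t : ℝ, HasDerivAt (fun y => γ y t) (pdx γ x t) x :=
    fun x t => hasDerivX hγ x t
  have Hg1 : ∀ x t : ℝ, HasDerivAt (fun y => pdx γ y t) (q x t • γ x t) x := by
    intro x t
    have h := hasDerivX hγ1s x t
    rwa [hcurv x t] at h
  -- Step 1: first x-derivative of the time derivative of γ
  have h1 : ∀ x t : ℝ, pdx (pdt γ) x t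
      = ((1/16) * (pdx (pdx (pdx (pdx q))) x t - 6 * (pdx q x t) ^ 2
            - 6 * q x t * pdx (pdx q) x t)
          + (1/8) * (3 * q x t ^ 2 - pdx (pdx q) x t) * q x t) • γ x t
        + ((1/16) * (pdx (pdx (pdx q)) x t - 6 * q x t * pdx q x t)
          + (1/8) * (6 * q x t * pdx q x t - pdx (pdx (pdx q)) x t)) • pdx γ x t := by
    intro x t
    have hA : HasDerivAt
        (fun y => (1/16) * (pdx (pdx (pdx q)) y t - 6 * q y t * pdx q y t))
        ((1/16) * (pdx (pdx (pdx (pdx q))) x t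
          - (6 * pdx q x t * pdx q x t + 6 * q x t * pdx (pdx q) x t))) x :=
      ((Hq3 x t).sub (((Hq0 x t).const_mul 6).mul (Hq1 x t))).const_mul (1/16)
    have hB : HasDerivAt
        (fun y => (1/8) * (3 * q y t ^ 2 - pdx (pdx q) y t))
        ((1/8) * (3 * ((2 : ℕ) * q x t ^ (2 - 1) * pdx q x t)
          - pdx (pdx (pdx q)) x t)) x :=
      ((((Hq0 x t).pow 2).const_mul 3).sub (Hq2 x t)).const_mul (1/8)
    have hfun : (fun y => pdt γ y t)
        = fun y => ((1/16) * (pdx (pdx (pdx q)) y t - 6 * q y t * pdx q y t)) • γ y t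
          + ((1/8) * (3 * q y t ^ 2 - pdx (pdx q) y t)) • pdx γ y t :=
      funext fun y => hflow y t
    have hD := (hA.smul (Hg0 x t)).add (hB.smul (Hg1 x t))
    show deriv (fun y => pdt γ y t) x = _
    rw [hfun]; refine hD.deriv.trans ?_
    match_scalars <;> push_cast <;> ring
  intro x t
  -- Step 2: second x-derivative of the time derivative of γ
  have hC1 : HasDerivAt
      (fun y => (1/16) * (pdx (pdx (pdx (pdx q))) y t - 6 * (pdx q y t) ^ 2
            - 6 * q y t * pdx (pdx q) y t)
          + (1/8) * (3 * q y t ^ 2 - pdx (pdx q) y t) * q y t)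
      ((1/16) * (pdx (pdx (pdx (pdx (pdx q)))) x t
          - ((2 : ℕ) * pdx q x t ^ (2 - 1) * pdx (pdx q) x t) * 6
          - (6 * q x t * pdx (pdx (pdx q)) x t + 6 * pdx q x t * pdx (pdx q) x t))
        + ((1/8) * (3 * ((2 : ℕ) * q x t ^ (2 - 1) * pdx q x t)
            - pdx (pdx (pdx q)) x t) * q x t
          + (1/8) * (3 * q x t ^ 2 - pdx (pdx q) x t) * pdx q x t)) x := by
    have p1 := (((Hq4 x t).sub (((Hq1 x t).pow 2).const_mul 6)).sub
      (((Hq0 x t).const_mul 6).mul (Hq2 x t))).const_mul (1/16)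
    have p2 := (((((Hq0 x t).pow 2).const_mul 3).sub (Hq2 x t)).const_mul (1/8)).mul (Hq0 x t)
    have := p1.add p2
    refine this.congr_deriv ?_
    push_cast; simp only [Pi.sub_apply, Pi.pow_apply]; ring
  have hD1 : HasDerivAt
      (fun y => (1/16) * (pdx (pdx (pdx q)) y t - 6 * q y t * pdx q y t)
          + (1/8) * (6 * q y t * pdx q y t - pdx (pdx (pdx q)) y t))
      ((1/16) * (pdx (pdx (pdx (pdx q))) x t
          - (6 * q x t * pdx (pdx q) x t + 6 * pdx q x t * pdx q x t))
        + (1/8) * ((6 * q x t * pdx (pdx q) x t + 6 * pdx q x t * pdx q x t)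
          - pdx (pdx (pdx (pdx q))) x t)) x := by
    have p1 := ((Hq3 x t).sub (((Hq0 x t).const_mul 6).mul (Hq1 x t))).const_mul (1/16)
    have p2 := ((((Hq0 x t).const_mul 6).mul (Hq1 x t)).sub (Hq3 x t)).const_mul (1/8)
    have := p1.add p2
    refine this.congr_deriv ?_
    ring
  have hR : pdx (pdx (pdt γ)) x t
      = ((1/16) * (pdx (pdx (pdx (pdx (pdx q)))) x t
            - 20 * pdx q x t * pdx (pdx q) x t
            - 9 * q x t * pdx (pdx (pdx q)) x t
            + 24 * q x t ^ 2 * pdx q x t)) • γ x t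
        + ((1/8) * (3 * q x t ^ 3 - q x t * pdx (pdx q) x t)) • pdx γ x t := by
    have hfun : (fun y => pdx (pdt γ) y t)
        = fun y => ((1/16) * (pdx (pdx (pdx (pdx q))) y t - 6 * (pdx q y t) ^ 2
            - 6 * q y t * pdx (pdx q) y t)
          + (1/8) * (3 * q y t ^ 2 - pdx (pdx q) y t) * q y t) • γ y t
        + ((1/16) * (pdx (pdx (pdx q)) y t - 6 * q y t * pdx q y t)
          + (1/8) * (6 * q y t * pdx q y t - pdx (pdx (pdx q)) y t)) • pdx γ y t :=
      funext fun y => h1 y t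
    have hD := (hC1.smul (Hg0 x t)).add (hD1.smul (Hg1 x t))
    show deriv (fun y => pdx (pdt γ) y t) x = _
    rw [hfun]; refine hD.deriv.trans ?_
    match_scalars <;> push_cast <;> ring
  -- Step 3: mixed partials commute
  have hswap : pdt (pdx (pdx γ)) x t = pdx (pdx (pdt γ)) x t := by
    have e1 : pdt (pdx (pdx γ)) x t = pdx (pdt (pdx γ)) x t := pdt_pdx_comm hγ1s x t
    have e2 : pdt (pdx γ) = pdx (pdt γ) :=
      funext fun a => funext fun b => pdt_pdx_comm hγ a b
    rw [e1, e2]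
  -- Step 4: time derivative of q • γ
  have hL : pdt (pdx (pdx γ)) x t
      = (pdt q x t
          + q x t * ((1/16) * (pdx (pdx (pdx q)) x t - 6 * q x t * pdx q x t))) • γ x t
        + (q x t * ((1/8) * (3 * q x t ^ 2 - pdx (pdx q) x t))) • pdx γ x t := by
    have hfun : (fun s => pdx (pdx γ) x s) = fun s => q x s • γ x s :=
      funext fun s => hcurv x s
    have hD := (hasDerivT hq x t).smul (hasDerivT hγ x t)
    show deriv (fun s => pdx (pdx γ) x s) t = _
    rw [hfun]; refine hD.deriv.trans ?_; rw [hflow x t]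
    match_scalars <;> ring
  -- Combine and extract the γ-coefficient
  have hdet' : γ x t 0 * pdx γ x t 1 - γ x t 1 * pdx γ x t 0 = 1 := hdet x t
  have hkey := coeff_left hdet' ((hL.symm.trans hswap).trans hR)
  linear_combination hkey
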